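/- Let A be an n×n complex matrix such that every eigenvalue of A has negative real part, and let C be a 1×n complex row vector with A + A* + C*C = 0. Let φ be a finite Blaschke product of degree strictly less than n, and let x be a nonzero vector in ℂⁿ satisfying x = φ̃(−A)*φ̃(−A)x. Then φ̃(−A)x ≠ 0, and for every complex s with Re(s) > 0, the scalar identity C(sI − A)^{-1}x = φ(s)·C(sI − A)^{-1}φ̃(−A)x holds. -/

import Mathlib

/-
Compare vectors through their Gram matrices `yᴴ * y` in the Loewner order. Since
`A + Aᴴ = -Cᴴ C`, a single factor `F_a = (-A + a)(-A - ā)⁻¹` of `φ̃(-A)` satisfies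
`(F_a y)ᴴ (F_a y) = yᴴ y + 2 Re a · (C v)ᴴ (C v)` with `v = (-A - ā)⁻¹ y`, so every factor is a
contraction. The fixed-point equation says that `φ̃(-A) = conj ρ · ∏ F_a` preserves `xᴴ x`, hence
so does each factor on the vector it acts on, which forces `C v = 0`. For such `v`,
`C (s - A)⁻¹ (-A + c) v = (c - s) · C (s - A)⁻¹ v`; taking `c = -ā` and `c = a` gives
`C (s - A)⁻¹ y = (s + ā)/(s - a) · C (s - A)⁻¹ F_a y`, and these identities multiply to `φ(s)`.
-/

open Matrix

/-- Evaluation of the finite Blaschke product with data `(ρ, α)` at a complex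
number `s`: `ρ * ∏ k (s + conj (α k)) / (s - α k)`. -/
noncomputable def blaschkeEval {d : ℕ} (ρ : ℂ) (α : Fin d → ℂ) (s : ℂ) : ℂ :=
  ρ * ∏ k : Fin d, (s + starRingEnd ℂ (α k)) / (s - α k)

/-- Evaluation of the finite Blaschke product with data `(ρ, α)` at a square
complex matrix `M`: `ρ • ∏ k (M + conj (α k) • 1) * (M - α k • 1)⁻¹`. -/
noncomputable def blaschkeEvalM {n d : ℕ} (ρ : ℂ) (α : Fin d → ℂ)
    (M : Matrix (Fin n) (Fin n) ℂ) : Matrix (Fin n) (Fin n) ℂ :=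
  ρ • (List.ofFn fun k : Fin d =>
      (M + (starRingEnd ℂ (α k)) • (1 : Matrix (Fin n) (Fin n) ℂ)) *
        (M - (α k) • (1 : Matrix (Fin n) (Fin n) ℂ))⁻¹).prod

/-- For a Blaschke product `b` with data `(ρ, α)`, the function
`b̃(s) = conj (b (conj s))` is the Blaschke product with data
`(conj ρ, conj ∘ α)`.  This is its evaluation at a square matrix. -/
noncomputable def blaschkeTildeEvalM {n d : ℕ} (ρ : ℂ) (α : Fin d → ℂ)
    (M : Matrix (Fin n) (Fin n) ℂ) : Matrix (Fin n) (Fin n) ℂ :=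
  blaschkeEvalM (starRingEnd ℂ ρ) (fun k => starRingEnd ℂ (α k)) M

open scoped MatrixOrder ComplexOrder

section

variable {ι κ μ : Type*} [Fintype ι] [DecidableEq ι]

theorem conjTranspose_mul_self_neg_add_smul_one (A : Matrix ι ι ℂ) (a : ℂ) :
    (-A + a • 1)ᴴ * (-A + a • 1) =
      (-A - starRingEnd ℂ a • 1)ᴴ * (-A - starRingEnd ℂ a • 1) -
        (a + starRingEnd ℂ a) • (A + Aᴴ) := by
  simp only [conjTranspose_add, conjTranspose_sub, conjTranspose_neg, conjTranspose_smul,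
    conjTranspose_one, Matrix.add_mul, Matrix.sub_mul, Matrix.mul_add, Matrix.mul_sub,
    Matrix.neg_mul, Matrix.mul_neg, smul_mul_assoc, mul_smul_comm, Matrix.mul_one,
    Matrix.one_mul, Complex.star_def, Complex.conj_conj]
  module

theorem isUnit_det_smul_one_sub {A : Matrix ι ι ℂ} (hstab : ∀ z ∈ spectrum ℂ A, z.re < 0)
    {z : ℂ} (hz : 0 ≤ z.re) : IsUnit (z • (1 : Matrix ι ι ℂ) - A).det := by
  have hz' : z ∉ spectrum ℂ A := fun h => (hstab z h).not_ge hz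
  rw [spectrum.notMem_iff, Algebra.algebraMap_eq_smul_one] at hz'
  exact (Matrix.isUnit_iff_isUnit_det _).mp hz'

theorem isUnit_det_neg_sub_smul_one {A : Matrix ι ι ℂ} (hstab : ∀ z ∈ spectrum ℂ A, z.re < 0)
    {a : ℂ} (ha : a.re < 0) : IsUnit (-A - starRingEnd ℂ a • (1 : Matrix ι ι ℂ)).det := by
  rw [show -A - starRingEnd ℂ a • (1 : Matrix ι ι ℂ) = (-starRingEnd ℂ a) • 1 - A by
    rw [neg_smul]; abel]
  exact isUnit_det_smul_one_sub hstab (by simp only [Complex.neg_re, Complex.conj_re]; linarith)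

noncomputable def blaschkeFactor (A : Matrix ι ι ℂ) (a : ℂ) : Matrix ι ι ℂ :=
  (-A + a • 1) * (-A - starRingEnd ℂ a • 1)⁻¹

variable {A : Matrix ι ι ℂ} {C : Matrix κ ι ℂ}

theorem mul_resolvent_mul_neg_add_smul_one_mul {s : ℂ}
    (hs : IsUnit (s • (1 : Matrix ι ι ℂ) - A).det) {v : Matrix ι μ ℂ} (hv : C * v = 0) (c : ℂ) :
    C * (s • 1 - A)⁻¹ * ((-A + c • 1) * v) = (c - s) • (C * (s • 1 - A)⁻¹ * v) := by
  rw [show -A + c • (1 : Matrix ι ι ℂ) = (s • 1 - A) + (c - s) • 1 by rw [sub_smul]; abel,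
    Matrix.add_mul, Matrix.mul_add, ← Matrix.mul_assoc, Matrix.mul_assoc C,
    nonsing_inv_mul _ hs, Matrix.mul_one, hv, zero_add, Matrix.smul_mul, Matrix.one_mul,
    Matrix.mul_smul]

theorem mul_resolvent_mul_eq_smul_mul_resolvent_mul_blaschkeFactor
    (hstab : ∀ z ∈ spectrum ℂ A, z.re < 0) {a s : ℂ} (ha : a.re < 0) (hs : 0 < s.re)
    {y : Matrix ι μ ℂ} (hy : C * ((-A - starRingEnd ℂ a • 1)⁻¹ * y) = 0) :
    C * (s • 1 - A)⁻¹ * y =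
      ((s + starRingEnd ℂ a) / (s - a)) • (C * (s • 1 - A)⁻¹ * (blaschkeFactor A a * y)) := by
  have hsA := isUnit_det_smul_one_sub hstab hs.le
  have hsa : s - a ≠ 0 := sub_ne_zero.mpr fun h => by rw [h] at hs; linarith
  set v := (-A - starRingEnd ℂ a • 1)⁻¹ * y
  have hyv : y = (-A + (-starRingEnd ℂ a) • 1) * v := by
    rw [neg_smul, ← sub_eq_add_neg, ← Matrix.mul_assoc,
      mul_nonsing_inv _ (isUnit_det_neg_sub_smul_one hstab ha), Matrix.one_mul]
  rw [blaschkeFactor, Matrix.mul_assoc (-A + a • 1)]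
  conv_lhs => rw [hyv]
  rw [mul_resolvent_mul_neg_add_smul_one_mul hsA hy, mul_resolvent_mul_neg_add_smul_one_mul hsA hy,
    smul_smul]
  congr 1
  field_simp
  ring

variable [Fintype κ]

theorem gram_neg_add_smul_one_mul (hdiss : A + Aᴴ + Cᴴ * C = 0) (a : ℂ) (v : Matrix ι μ ℂ) :
    ((-A + a • 1) * v)ᴴ * ((-A + a • 1) * v) =
      ((-A - starRingEnd ℂ a • 1) * v)ᴴ * ((-A - starRingEnd ℂ a • 1) * v) +
        (2 * a.re) • ((C * v)ᴴ * (C * v)) := by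
  have hA : A + Aᴴ = -(Cᴴ * C) := eq_neg_of_add_eq_zero_left hdiss
  have hsmul : (2 * a.re) • ((C * v)ᴴ * (C * v)) =
      (a + starRingEnd ℂ a) • ((C * v)ᴴ * (C * v)) := by
    rw [Complex.add_conj]; rfl
  calc ((-A + a • 1) * v)ᴴ * ((-A + a • 1) * v)
      = vᴴ * ((-A + a • 1)ᴴ * (-A + a • 1)) * v := by
        simp only [conjTranspose_mul, Matrix.mul_assoc]
    _ = _ := by
        rw [conjTranspose_mul_self_neg_add_smul_one, hA, smul_neg, sub_neg_eq_add, hsmul]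
        simp only [Matrix.mul_add, Matrix.add_mul, Matrix.mul_smul, Matrix.smul_mul,
          conjTranspose_mul, Matrix.mul_assoc]

theorem gram_blaschkeFactor_mul (hstab : ∀ z ∈ spectrum ℂ A, z.re < 0)
    (hdiss : A + Aᴴ + Cᴴ * C = 0) {a : ℂ} (ha : a.re < 0) (y : Matrix ι μ ℂ) :
    (blaschkeFactor A a * y)ᴴ * (blaschkeFactor A a * y) =
      yᴴ * y + (2 * a.re) •
        ((C * ((-A - starRingEnd ℂ a • 1)⁻¹ * y))ᴴ * (C * ((-A - starRingEnd ℂ a • 1)⁻¹ * y))) := by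
  have hy : (-A - starRingEnd ℂ a • 1) * ((-A - starRingEnd ℂ a • 1)⁻¹ * y) = y := by
    rw [← Matrix.mul_assoc, mul_nonsing_inv _ (isUnit_det_neg_sub_smul_one hstab ha),
      Matrix.one_mul]
  rw [blaschkeFactor, Matrix.mul_assoc, gram_neg_add_smul_one_mul hdiss, hy]

theorem gram_blaschkeFactor_mul_le [Finite μ] (hstab : ∀ z ∈ spectrum ℂ A, z.re < 0)
    (hdiss : A + Aᴴ + Cᴴ * C = 0) {a : ℂ} (ha : a.re < 0) (y : Matrix ι μ ℂ) :
    (blaschkeFactor A a * y)ᴴ * (blaschkeFactor A a * y) ≤ yᴴ * y := by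
  rw [gram_blaschkeFactor_mul hstab hdiss ha, le_iff, sub_add_cancel_left, ← neg_smul]
  exact (posSemidef_conjTranspose_mul_self _).smul (by linarith)

theorem mul_inv_mul_eq_zero_of_gram_blaschkeFactor_mul_eq
    (hstab : ∀ z ∈ spectrum ℂ A, z.re < 0) (hdiss : A + Aᴴ + Cᴴ * C = 0) {a : ℂ} (ha : a.re < 0)
    {y : Matrix ι μ ℂ} (hy : (blaschkeFactor A a * y)ᴴ * (blaschkeFactor A a * y) = yᴴ * y) :
    C * ((-A - starRingEnd ℂ a • 1)⁻¹ * y) = 0 := by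
  rw [gram_blaschkeFactor_mul hstab hdiss ha, add_eq_left, smul_eq_zero] at hy
  exact conjTranspose_mul_self_eq_zero.mp (hy.resolve_left (by linarith))

theorem gram_prod_blaschkeFactor_mul_le [Finite μ] (hstab : ∀ z ∈ spectrum ℂ A, z.re < 0)
    (hdiss : A + Aᴴ + Cᴴ * C = 0) {l : List ℂ} (hl : ∀ a ∈ l, a.re < 0) (x : Matrix ι μ ℂ) :
    ((l.map (blaschkeFactor A)).prod * x)ᴴ * ((l.map (blaschkeFactor A)).prod * x) ≤ xᴴ * x := by
  induction l with
  | nil => simp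
  | cons a l ih =>
    rw [List.forall_mem_cons] at hl
    rw [List.map_cons, List.prod_cons, Matrix.mul_assoc]
    exact (gram_blaschkeFactor_mul_le hstab hdiss hl.1 _).trans (ih hl.2)

theorem mul_resolvent_mul_eq_prod_smul_of_gram_eq [Finite μ]
    (hstab : ∀ z ∈ spectrum ℂ A, z.re < 0) (hdiss : A + Aᴴ + Cᴴ * C = 0) {l : List ℂ}
    (hl : ∀ a ∈ l, a.re < 0) {x : Matrix ι μ ℂ}
    (hx : ((l.map (blaschkeFactor A)).prod * x)ᴴ * ((l.map (blaschkeFactor A)).prod * x) = xᴴ * x)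
    {s : ℂ} (hs : 0 < s.re) :
    C * (s • 1 - A)⁻¹ * x = (l.map fun a => (s + starRingEnd ℂ a) / (s - a)).prod •
      (C * (s • 1 - A)⁻¹ * ((l.map (blaschkeFactor A)).prod * x)) := by
  induction l with
  | nil => simp
  | cons a l ih =>
    rw [List.forall_mem_cons] at hl
    set y := (l.map (blaschkeFactor A)).prod * x
    have hcons : ((a :: l).map (blaschkeFactor A)).prod * x = blaschkeFactor A a * y := by
      rw [List.map_cons, List.prod_cons, Matrix.mul_assoc]
    rw [hcons] at hx ⊢
    have hFy := gram_blaschkeFactor_mul_le hstab hdiss hl.1 y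
    have hy : yᴴ * y = xᴴ * x :=
      (gram_prod_blaschkeFactor_mul_le hstab hdiss hl.2 x).antisymm (hx ▸ hFy)
    have hCy :=
      mul_inv_mul_eq_zero_of_gram_blaschkeFactor_mul_eq hstab hdiss hl.1 (hx.trans hy.symm)
    rw [ih hl.2 hy, mul_resolvent_mul_eq_smul_mul_resolvent_mul_blaschkeFactor hstab hl.1 hs hCy,
      smul_smul, List.map_cons, List.prod_cons, mul_comm]

end

theorem blaschkeTildeEvalM_neg {n d : ℕ} (A : Matrix (Fin n) (Fin n) ℂ) (ρ : ℂ) (α : Fin d → ℂ) :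
    blaschkeTildeEvalM ρ α (-A) =
      starRingEnd ℂ ρ • ((List.ofFn α).map (blaschkeFactor A)).prod := by
  simp only [blaschkeTildeEvalM, blaschkeEvalM, Complex.conj_conj, List.map_ofFn]
  rfl

theorem blaschkeEval_eq_mul_prod {d : ℕ} (ρ : ℂ) (α : Fin d → ℂ) (s : ℂ) :
    blaschkeEval ρ α s = ρ * ((List.ofFn α).map fun a => (s + starRingEnd ℂ a) / (s - a)).prod := by
  rw [blaschkeEval, List.map_ofFn, List.prod_ofFn]
  rfl

theorem stmt_8_general {n d : ℕ}
    (A : Matrix (Fin n) (Fin n) ℂ)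
    (hstab : ∀ z ∈ spectrum ℂ A, z.re < 0)
    (C : Matrix (Fin 1) (Fin n) ℂ)
    (hdiss : A + Aᴴ + Cᴴ * C = 0)
    (ρ : ℂ) (hρ : ‖ρ‖ = 1)
    (α : Fin d → ℂ) (hα : ∀ k, (α k).re < 0)
    (x : Matrix (Fin n) (Fin 1) ℂ) (hx : x ≠ 0)
    (hfix : x = (blaschkeTildeEvalM ρ α (-A))ᴴ * blaschkeTildeEvalM ρ α (-A) * x) :
    blaschkeTildeEvalM ρ α (-A) * x ≠ 0 ∧
      ∀ s : ℂ, 0 < s.re →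
        C * (s • (1 : Matrix (Fin n) (Fin n) ℂ) - A)⁻¹ * x =
          blaschkeEval ρ α s •
            (C * (s • (1 : Matrix (Fin n) (Fin n) ℂ) - A)⁻¹ *
              (blaschkeTildeEvalM ρ α (-A) * x)) := by
  set B := blaschkeTildeEvalM ρ α (-A)
  set P := ((List.ofFn α).map (blaschkeFactor A)).prod
  have hB : B = starRingEnd ℂ ρ • P := blaschkeTildeEvalM_neg A ρ α
  have hρ' : ρ * starRingEnd ℂ ρ = 1 := by
    rw [Complex.mul_conj, Complex.normSq_eq_norm_sq, hρ]; norm_num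
  have hgram : (P * x)ᴴ * (P * x) = xᴴ * x := by
    calc (P * x)ᴴ * (P * x) = (B * x)ᴴ * (B * x) := by
          rw [hB, Matrix.smul_mul, conjTranspose_smul, Matrix.smul_mul, Matrix.mul_smul, smul_smul,
            Complex.star_def, Complex.conj_conj, hρ', one_smul]
      _ = xᴴ * x := by rw [conjTranspose_mul, Matrix.mul_assoc, ← Matrix.mul_assoc Bᴴ, ← hfix]
  refine ⟨fun hBx => hx ?_, fun s hs => ?_⟩
  · rw [hfix, Matrix.mul_assoc, hBx, Matrix.mul_zero]
  · rw [mul_resolvent_mul_eq_prod_smul_of_gram_eq hstab hdiss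
      (List.forall_mem_ofFn_iff.mpr hα) hgram hs, blaschkeEval_eq_mul_prod, hB,
      Matrix.smul_mul, Matrix.mul_smul, smul_smul, mul_comm ρ, mul_assoc, hρ', mul_one]

theorem stmt_8 {n d : ℕ}
    (A : Matrix (Fin n) (Fin n) ℂ)
    (hstab : ∀ z ∈ spectrum ℂ A, z.re < 0)
    (C : Matrix (Fin 1) (Fin n) ℂ)
    (hdiss : A + Aᴴ + Cᴴ * C = 0)
    (ρ : ℂ) (hρ : ‖ρ‖ = 1)
    (α : Fin d → ℂ) (hα : ∀ k, (α k).re < 0)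
    (hdeg : d < n)
    (x : Matrix (Fin n) (Fin 1) ℂ) (hx : x ≠ 0)
    (hfix : x = (blaschkeTildeEvalM ρ α (-A))ᴴ * blaschkeTildeEvalM ρ α (-A) * x) :
    blaschkeTildeEvalM ρ α (-A) * x ≠ 0 ∧
      ∀ s : ℂ, 0 < s.re →
        C * (s • (1 : Matrix (Fin n) (Fin n) ℂ) - A)⁻¹ * x =
          blaschkeEval ρ α s •
            (C * (s • (1 : Matrix (Fin n) (Fin n) ℂ) - A)⁻¹ *
              (blaschkeTildeEvalM ρ α (-A) * x)) :=
  stmt_8_general A hstab C hdiss ρ hρ α hα x hx hfix
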